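/- The group G_V acts freely on the set of stable points of μ^{-1}(0): if (B,i,j) is a stable ADHM datum with μ(B,i,j) = 0 and g ∈ G_V satisfies g·(B,i,j) = (B,i,j), then g_k = id_{V_k} for every k ∈ I. (This is the freeness underlying the assertion that the stable locus of μ^{-1}(0) is a principal G_V-bundle over the quiver variety.) -/

import Mathlib

noncomputable section

/-- The data of a finite graph without edge loops, presented by its set `H` of oriented
edges over the vertex set `I`: source and target maps `src`, `tgt`, and a fixed-point-free
orientation-reversing involution `bar`. -/
structure GraphData (I H : Type) where
  src : H → I
  tgt : H → I
  bar : H → H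
  bar_invol : ∀ h, bar (bar h) = h
  bar_ne_self : ∀ h, bar h ≠ h
  src_bar : ∀ h, src (bar h) = tgt h
  tgt_bar : ∀ h, tgt (bar h) = src h
  no_loops : ∀ h, src h ≠ tgt h

/-- Transport of the fibres of a family of normed spaces along an equality of indices. -/
def vCast {I : Type} (V : I → Type)
    [∀ k, NormedAddCommGroup (V k)] [∀ k, NormedSpace ℂ (V k)]
    {k l : I} (e : k = l) : V k ≃L[ℂ] V l := by
  subst e
  exact ContinuousLinearEquiv.refl ℂ (V k)

/-- Stability of an ADHM datum `(B, i, j)`: the only family of subspaces `S k ⊆ V k`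
which is `B`-invariant and contained in `ker (j k)` is the zero family. -/
def IsStable {I H : Type} (G : GraphData I H) (V W : I → Type)
    [∀ k, NormedAddCommGroup (V k)] [∀ k, NormedSpace ℂ (V k)]
    [∀ k, NormedAddCommGroup (W k)] [∀ k, NormedSpace ℂ (W k)]
    (B : ∀ h : H, V (G.src h) →L[ℂ] V (G.tgt h))
    (j : ∀ k : I, V k →L[ℂ] W k) : Prop :=
  ∀ S : ∀ k : I, Submodule ℂ (V k),
    (∀ h : H, ∀ x ∈ S (G.src h), B h x ∈ S (G.tgt h)) →
    (∀ k : I, ∀ x ∈ S k, j k x = 0) →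
    ∀ k : I, S k = ⊥

/-- For an oriented edge `h`, the composite `A ∘ A'` of a map `A` along `h` and a map `A'`
along `bar h`, as an endomorphism of `V (tgt h)`. -/
def barComp {I H : Type} (G : GraphData I H) (V : I → Type)
    [∀ k, NormedAddCommGroup (V k)] [∀ k, NormedSpace ℂ (V k)] (h : H)
    (A : V (G.src h) →L[ℂ] V (G.tgt h))
    (A' : V (G.src (G.bar h)) →L[ℂ] V (G.tgt (G.bar h))) :
    V (G.tgt h) →L[ℂ] V (G.tgt h) :=
  A.comp ((vCast V (G.tgt_bar h) : V (G.tgt (G.bar h)) →L[ℂ] V (G.src h)).comp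
    (A'.comp ((vCast V (G.src_bar h)).symm : V (G.tgt h) →L[ℂ] V (G.src (G.bar h)))))

/-- The `k`-th component of the moment map `μ(B, i, j) = ε B B + i j`. -/
def momentMap {I H : Type} [Fintype H] [DecidableEq I] (G : GraphData I H)
    (V W : I → Type)
    [∀ k, NormedAddCommGroup (V k)] [∀ k, NormedSpace ℂ (V k)]
    [∀ k, NormedAddCommGroup (W k)] [∀ k, NormedSpace ℂ (W k)]
    (ε : H → ℂ)
    (B : ∀ h : H, V (G.src h) →L[ℂ] V (G.tgt h))
    (i : ∀ k : I, W k →L[ℂ] V k) (j : ∀ k : I, V k →L[ℂ] W k) (k : I) :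
    V k →L[ℂ] V k :=
  (∑ h : H, if e : G.tgt h = k then
      ((vCast V e : V (G.tgt h) →L[ℂ] V k).comp
        ((ε h • barComp G V h (B h) (B (G.bar h))).comp
          ((vCast V e).symm : V k →L[ℂ] V (G.tgt h))))
    else 0)
    + (i k).comp (j k)

/-- The action of `g ∈ G_V = ∏ₖ GL(V_k)` on the `B`-component of an ADHM datum. -/
def actB {I H : Type} (G : GraphData I H) (V : I → Type)
    [∀ k, NormedAddCommGroup (V k)] [∀ k, NormedSpace ℂ (V k)]
    (g : ∀ k : I, V k ≃L[ℂ] V k)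
    (B : ∀ h : H, V (G.src h) →L[ℂ] V (G.tgt h)) :
    ∀ h : H, V (G.src h) →L[ℂ] V (G.tgt h) :=
  fun h => ((g (G.tgt h) : V (G.tgt h) →L[ℂ] V (G.tgt h)).comp (B h)).comp
    ((g (G.src h)).symm : V (G.src h) →L[ℂ] V (G.src h))

/-- The action of `g ∈ G_V` on the `i`-component of an ADHM datum. -/
def actI {I : Type} (V W : I → Type)
    [∀ k, NormedAddCommGroup (V k)] [∀ k, NormedSpace ℂ (V k)]
    [∀ k, NormedAddCommGroup (W k)] [∀ k, NormedSpace ℂ (W k)]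
    (g : ∀ k : I, V k ≃L[ℂ] V k) (i : ∀ k : I, W k →L[ℂ] V k) :
    ∀ k : I, W k →L[ℂ] V k :=
  fun k => (g k : V k →L[ℂ] V k).comp (i k)

/-- The action of `g ∈ G_V` on the `j`-component of an ADHM datum. -/
def actJ {I : Type} (V W : I → Type)
    [∀ k, NormedAddCommGroup (V k)] [∀ k, NormedSpace ℂ (V k)]
    [∀ k, NormedAddCommGroup (W k)] [∀ k, NormedSpace ℂ (W k)]
    (g : ∀ k : I, V k ≃L[ℂ] V k) (j : ∀ k : I, V k →L[ℂ] W k) :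
    ∀ k : I, V k →L[ℂ] W k :=
  fun k => (j k).comp ((g k).symm : V k →L[ℂ] V k)

/-- The group `G_V` acts freely on the set of stable points of
`μ⁻¹(0)`: if `(B, i, j)` is a stable ADHM datum with `μ(B,i,j) = 0` and `g ∈ G_V`
fixes `(B,i,j)`, then `g_k = id` for every `k`. -/
theorem statement3
    {I H : Type} [Fintype I] [Fintype H] [DecidableEq I]
    (G : GraphData I H) (V W : I → Type)
    [∀ k, NormedAddCommGroup (V k)] [∀ k, NormedSpace ℂ (V k)]
    [∀ k, FiniteDimensional ℂ (V k)]
    [∀ k, NormedAddCommGroup (W k)] [∀ k, NormedSpace ℂ (W k)]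
    [∀ k, FiniteDimensional ℂ (W k)]
    (ε : H → ℂ) (hε0 : ∀ h, ε h ≠ 0) (hεbar : ∀ h, ε (G.bar h) = - ε h)
    (B : ∀ h : H, V (G.src h) →L[ℂ] V (G.tgt h))
    (i : ∀ k : I, W k →L[ℂ] V k) (j : ∀ k : I, V k →L[ℂ] W k)
    (hst : IsStable G V W B j)
    (hμ : ∀ k : I, momentMap G V W ε B i j k = 0)
    (g : ∀ k : I, V k ≃L[ℂ] V k)
    (hgB : actB G V g B = B) (hgi : actI V W g i = i) (hgj : actJ V W g j = j) :
    ∀ k : I, g k = ContinuousLinearEquiv.refl ℂ (V k) := by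
  have hgBapp : ∀ h x, g (G.tgt h) (B h x) = B h (g (G.src h) x) := by
    intro h x
    have h1 := congrFun hgB h
    have h2 := congrArg (fun T => T (g (G.src h) x)) h1
    simpa [actB] using h2
  have hgjapp : ∀ k x, j k (g k x) = j k x := by
    intro k x
    have h1 := congrFun hgj k
    have h2 := congrArg (fun T => T (g k x)) h1
    simpa [actJ] using h2.symm
  set S : ∀ k : I, Submodule ℂ (V k) := fun k =>
    LinearMap.range ((((g k : V k →L[ℂ] V k) - ContinuousLinearMap.id ℂ (V k)) : V k →L[ℂ] V k) : V k →ₗ[ℂ] V k)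
    with hSdef
  have hS : ∀ k, S k = ⊥ := by
    apply hst S
    · rintro h x ⟨y, rfl⟩
      refine ⟨B h y, ?_⟩
      simp [hgBapp h y]
    · rintro k x ⟨y, rfl⟩
      simp [hgjapp k y]
  intro k
  ext x
  have hx : g k x - x ∈ S k := ⟨x, by simp⟩
  rw [hS k, Submodule.mem_bot, sub_eq_zero] at hx
  simpa using hx
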